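/- Let a₁, …, a_m be pairwise distinct real numbers and let I ⊆ ℝ be a nonempty open interval such that |E − a_j| < 2 for every E ∈ I and every j = 1, …, m. For E ∈ I set φ_j(E) = arccos((E − a_j)/2). Then the set of E ∈ I for which there exist a nonzero integer vector w ∈ ℤ^m and an integer k with ∑_{j=1}^m w_j·φ_j(E) = 2πk has Lebesgue measure zero. -/

import Mathlib

/-!
Fix `w ≠ 0` and discard the indices with `w j = 0`. The phase sum
`f E = ∑ j, w j * arccos ((E - a j) / 2)` has derivative `-∑ j, w j / √(4 - (E - a j)²)`, which
is real analytic on the interval where all phases are defined. It does not vanish identically: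
approaching the right end `a j₁ + 2` of the leftmost of the intervals `(a j - 2, a j + 2)`, the
`j₁`-term blows up while, the `a j` being distinct, all other terms stay bounded. So the zeros of
`f'` are isolated, as are the points of a level set of `f` where `f' ≠ 0`; hence every level set
of `f` is countable, and the exceptional set is a countable union of such level sets.
-/

open MeasureTheory Filter Topology Set Function

theorem AnalyticAt.sqrt {f : ℝ → ℝ} {x : ℝ} (hf : AnalyticAt ℝ f x) (hx : 0 < f x) :
    AnalyticAt ℝ (fun y => √(f y)) x := by
  have hexp : AnalyticAt ℝ (fun y => Real.exp (Real.log (f y) * (1 / 2))) x :=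
    analyticAt_rexp.comp ((hf.log hx).mul analyticAt_const)
  refine hexp.congr ?_
  filter_upwards [hf.continuousAt.eventually (lt_mem_nhds hx)] with y hy
  rw [Real.sqrt_eq_rpow, Real.rpow_def_of_pos hy]

theorem countable_setOf_eq_of_hasDerivAt {f g : ℝ → ℝ} {U : Set ℝ} (hU : IsPreconnected U)
    (hf : ∀ x ∈ U, HasDerivAt f (g x) x) (hg : AnalyticOnNhd ℝ g U) (hg0 : ∃ x ∈ U, g x ≠ 0)
    (c : ℝ) : {x ∈ U | f x = c}.Countable := by
  have hzeros : IsDiscrete ({x | g x = 0} ∩ U) := by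
    refine isDiscrete_of_codiscreteWithin ?_
    obtain ⟨x, hxU, hgx⟩ := hg0
    exact (hg.eqOn_zero_or_eventually_ne_zero_of_preconnected hU).resolve_left
      fun h => hgx (h hxU)
  have hregular : IsDiscrete {x ∈ U | f x = c ∧ g x ≠ 0} := by
    refine isDiscrete_iff_nhdsNE.2 fun x ⟨hxU, hfx, hgx⟩ => inf_principal_eq_bot.2 ?_
    filter_upwards [(hf x hxU).eventually_ne hgx] with y hy ⟨_, hfy, _⟩
    exact hy (hfy.trans hfx.symm)
  have hcover : {x ∈ U | f x = c} ⊆ ({x | g x = 0} ∩ U) ∪ {x ∈ U | f x = c ∧ g x ≠ 0} := by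
    rintro x ⟨hxU, hfx⟩
    by_cases hgx : g x = 0
    exacts [Or.inl ⟨hgx, hxU⟩, Or.inr ⟨hxU, hfx, hgx⟩]
  refine Countable.mono hcover (Countable.union ?_ ?_)
  exacts [(HereditarilyLindelofSpace.isLindelof _).countable_of_isDiscrete hzeros,
    (HereditarilyLindelofSpace.isLindelof _).countable_of_isDiscrete hregular]

section Arccos

variable {c E : ℝ}

theorem four_sub_sq_pos (h : |E - c| < 2) : 0 < 4 - (E - c) ^ 2 := by
  have := abs_lt.1 h
  nlinarith

theorem hasDerivAt_arccos_sub_div_two (h : |E - c| < 2) :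
    HasDerivAt (fun x => Real.arccos ((x - c) / 2)) (-(√(4 - (E - c) ^ 2))⁻¹) E := by
  have habs := abs_lt.1 h
  have hinner : HasDerivAt (fun x : ℝ => (x - c) / 2) (1 / 2) E := by
    simpa using ((hasDerivAt_id E).sub_const c).div_const 2
  refine ((Real.hasDerivAt_arccos (by linarith) (by linarith)).comp E hinner).congr_deriv ?_
  have hsqrt : √(4 - (E - c) ^ 2) = 2 * √(1 - ((E - c) / 2) ^ 2) := by
    rw [show 4 - (E - c) ^ 2 = 2 ^ 2 * (1 - ((E - c) / 2) ^ 2) by ring,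
      Real.sqrt_mul (by positivity), Real.sqrt_sq zero_le_two]
  have hpos : 0 < √(1 - ((E - c) / 2) ^ 2) := Real.sqrt_pos.2 (by nlinarith)
  rw [hsqrt]
  field_simp

theorem analyticAt_inv_sqrt_four_sub_sq (h : |E - c| < 2) :
    AnalyticAt ℝ (fun x => (√(4 - (x - c) ^ 2))⁻¹) E := by
  have hpoly : AnalyticAt ℝ (fun x => 4 - (x - c) ^ 2) E := by fun_prop
  exact (hpoly.sqrt (four_sub_sq_pos h)).inv (Real.sqrt_pos.2 (four_sub_sq_pos h)).ne'

end Arccos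

theorem tendsto_inv_sqrt_four_sub_sq_atTop (c : ℝ) :
    Tendsto (fun x => (√(4 - (x - c) ^ 2))⁻¹) (𝓝[<] (c + 2)) atTop := by
  refine tendsto_inv_nhdsGT_zero.comp (tendsto_nhdsWithin_iff.2 ⟨?_, ?_⟩)
  · have hcont : Continuous fun x : ℝ => √(4 - (x - c) ^ 2) := by fun_prop
    convert (hcont.tendsto (c + 2)).mono_left nhdsWithin_le_nhds
    norm_num
  · filter_upwards [Ioo_mem_nhdsLT (show c - 2 < c + 2 by linarith)] with E hE
    exact Real.sqrt_pos.2 (four_sub_sq_pos (abs_lt.2 ⟨by linarith [hE.1], by linarith [hE.2]⟩))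

section Phase

variable {ι : Type*} (a : ι → ℝ)

def phaseDomain : Set ℝ := ⋂ j, Metric.ball (a j) 2

variable {a}

theorem mem_phaseDomain {E : ℝ} : E ∈ phaseDomain a ↔ ∀ j, |E - a j| < 2 := by
  simp [phaseDomain, Real.dist_eq]

theorem convex_phaseDomain : Convex ℝ (phaseDomain a) :=
  convex_iInter fun _ => convex_ball _ _

variable [Fintype ι]

variable (a) in
noncomputable def phaseSum (w : ι → ℤ) (E : ℝ) : ℝ := ∑ j, (w j : ℝ) * Real.arccos ((E - a j) / 2)

variable (a) in
noncomputable def phaseDensity (w : ι → ℤ) (E : ℝ) : ℝ := ∑ j, (w j : ℝ) * (√(4 - (E - a j) ^ 2))⁻¹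

variable {w : ι → ℤ}

theorem hasDerivAt_phaseSum {E : ℝ} (hE : E ∈ phaseDomain a) :
    HasDerivAt (phaseSum a w) (-phaseDensity a w E) E := by
  have hterm := fun j (_ : j ∈ Finset.univ) =>
    (hasDerivAt_arccos_sub_div_two (mem_phaseDomain.1 hE j)).const_mul (w j : ℝ)
  have hneg : -phaseDensity a w E = ∑ j, (w j : ℝ) * -(√(4 - (E - a j) ^ 2))⁻¹ := by
    simp [phaseDensity, Finset.sum_neg_distrib]
  rw [hneg]
  exact HasDerivAt.fun_sum hterm

theorem analyticOnNhd_phaseDensity : AnalyticOnNhd ℝ (phaseDensity a w) (phaseDomain a) :=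
  fun _ hE => Finset.analyticAt_fun_sum _ fun j _ =>
    analyticAt_const.mul (analyticAt_inv_sqrt_four_sub_sq (mem_phaseDomain.1 hE j))

theorem exists_phaseDensity_ne_zero [Nonempty ι] (ha : Injective a) (hw : ∀ j, w j ≠ 0)
    (hD : (phaseDomain a).Nonempty) : ∃ E ∈ phaseDomain a, phaseDensity a w E ≠ 0 := by
  classical
  obtain ⟨E₀, hE₀⟩ := hD
  obtain ⟨j₁, hj₁⟩ := Finite.exists_min a
  have hlt : ∀ j, a j - 2 < a j₁ + 2 := fun j => by
    have h := mem_phaseDomain.1 hE₀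
    linarith [(abs_lt.1 (h j)).1, (abs_lt.1 (h j₁)).2]
  have hdomain : ∀ᶠ E in 𝓝[<] (a j₁ + 2), E ∈ phaseDomain a := by
    have hball : ∀ j, Metric.ball (a j) 2 ∈ 𝓝[<] (a j₁ + 2) := fun j => by
      rw [Real.ball_eq_Ioo]
      exact Ioo_mem_nhdsLT_of_mem ⟨hlt j, by linarith [hj₁ j]⟩
    filter_upwards [eventually_all.2 hball] with E hE using mem_iInter.2 hE
  have hsplit : ∀ E, (w j₁ : ℝ) * phaseDensity a w E =
      (w j₁ * w j₁ : ℝ) * (√(4 - (E - a j₁) ^ 2))⁻¹ +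
        ∑ j ∈ Finset.univ.erase j₁, (w j₁ : ℝ) * (w j * (√(4 - (E - a j) ^ 2))⁻¹) := by
    intro E
    rw [phaseDensity, Finset.mul_sum, ← Finset.add_sum_erase _ _ (Finset.mem_univ j₁), mul_assoc]
  have hbounded : ∀ j ∈ Finset.univ.erase j₁, Tendsto
      (fun E => (w j₁ : ℝ) * (w j * (√(4 - (E - a j) ^ 2))⁻¹)) (𝓝[<] (a j₁ + 2))
      (𝓝 ((w j₁ : ℝ) * (w j * (√(4 - (a j₁ + 2 - a j) ^ 2))⁻¹))) := by
    intro j hj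
    have hne : a j₁ < a j := (hj₁ j).lt_of_ne (ha.ne (Finset.ne_of_mem_erase hj).symm)
    have hcont := (analyticAt_inv_sqrt_four_sub_sq (c := a j) (E := a j₁ + 2)
      (abs_lt.2 ⟨by linarith [hlt j], by linarith⟩)).continuousAt
    exact ((hcont.tendsto.const_mul _).const_mul _).mono_left nhdsWithin_le_nhds
  have hw₁ : (0 : ℝ) < w j₁ * w j₁ := mul_self_pos.2 (Int.cast_ne_zero.2 (hw j₁))
  have hblowup : Tendsto (fun E => (w j₁ : ℝ) * phaseDensity a w E) (𝓝[<] (a j₁ + 2)) atTop := by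
    simp only [hsplit]
    exact ((tendsto_inv_sqrt_four_sub_sq_atTop (a j₁)).const_mul_atTop hw₁).atTop_add
      (tendsto_finsetSum _ hbounded)
  obtain ⟨E, hpos, hE⟩ := ((hblowup.eventually_gt_atTop 0).and hdomain).exists
  exact ⟨E, hE, fun h => by simp [h] at hpos⟩

theorem countable_setOf_phaseSum_eq [Nonempty ι] (ha : Injective a) (hw : ∀ j, w j ≠ 0)
    (c : ℝ) : {E ∈ phaseDomain a | phaseSum a w E = c}.Countable := by
  rcases (phaseDomain a).eq_empty_or_nonempty with hD | hD
  · simp [hD]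
  obtain ⟨E, hE, hρ⟩ := exists_phaseDensity_ne_zero ha hw hD
  exact countable_setOf_eq_of_hasDerivAt convex_phaseDomain.isPreconnected
    (fun _ => hasDerivAt_phaseSum) analyticOnNhd_phaseDensity.neg ⟨E, hE, neg_ne_zero.2 hρ⟩ c

theorem phaseSum_comp_val_support (E : ℝ) :
    phaseSum (a ∘ Subtype.val) (w ∘ Subtype.val : {j // w j ≠ 0} → ℤ) E = phaseSum a w E :=
  Fintype.sum_of_injective Subtype.val Subtype.val_injective _ _
    (fun j hj => by simp [not_not.1 fun h => hj ⟨⟨j, h⟩, rfl⟩]) fun _ => rfl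

theorem countable_setOf_phaseSum_eq_of_ne_zero (ha : Injective a) (hw : w ≠ 0) (c : ℝ) :
    {E ∈ phaseDomain a | phaseSum a w E = c}.Countable := by
  obtain ⟨j, hj⟩ := Function.ne_iff.1 hw
  have : Nonempty {j // w j ≠ 0} := ⟨⟨j, hj⟩⟩
  refine (countable_setOf_phaseSum_eq (ha.comp Subtype.val_injective)
    (fun j : {j // w j ≠ 0} => j.2) c).mono ?_
  rintro E ⟨hE, hc⟩
  exact ⟨mem_phaseDomain.2 fun j => mem_phaseDomain.1 hE j, (phaseSum_comp_val_support E).trans hc⟩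

end Phase

theorem stmt_6_general {m : ℕ} (a : Fin m → ℝ) (ha : Function.Injective a)
    (lo hi : ℝ)
    (hI : ∀ E ∈ Set.Ioo lo hi, ∀ j, |E - a j| < 2) :
    volume {E : ℝ | E ∈ Set.Ioo lo hi ∧ ∃ w : Fin m → ℤ, w ≠ 0 ∧ ∃ k : ℤ,
        (∑ j, (w j : ℝ) * Real.arccos ((E - a j) / 2)) = 2 * Real.pi * k} = 0 := by
  refine Countable.measure_zero ?_ volume
  have hcover : {E : ℝ | E ∈ Set.Ioo lo hi ∧ ∃ w : Fin m → ℤ, w ≠ 0 ∧ ∃ k : ℤ,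
      (∑ j, (w j : ℝ) * Real.arccos ((E - a j) / 2)) = 2 * Real.pi * k} ⊆
      ⋃ p : {w : Fin m → ℤ // w ≠ 0} × ℤ,
        {E ∈ phaseDomain a | phaseSum a p.1.1 E = 2 * Real.pi * p.2} := by
    rintro E ⟨hE, w, hw, k, hk⟩
    exact mem_iUnion.2 ⟨(⟨w, hw⟩, k), mem_phaseDomain.2 (hI E hE), hk⟩
  exact (countable_iUnion fun p => countable_setOf_phaseSum_eq_of_ne_zero ha p.1.2 _).mono hcover

/-- The set of energies in `I` at which some nonzero integer combination of the
phases `arccos((E − a_j)/2)` is an integer multiple of `2π` is a Lebesgue null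
set. -/
theorem stmt_6 {m : ℕ} (a : Fin m → ℝ) (ha : Function.Injective a)
    (lo hi : ℝ) (hlohi : lo < hi)
    (hI : ∀ E ∈ Set.Ioo lo hi, ∀ j, |E - a j| < 2) :
    volume {E : ℝ | E ∈ Set.Ioo lo hi ∧ ∃ w : Fin m → ℤ, w ≠ 0 ∧ ∃ k : ℤ,
        (∑ j, (w j : ℝ) * Real.arccos ((E - a j) / 2)) = 2 * Real.pi * k} = 0 :=
  stmt_6_general a ha lo hi hI
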